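/- arXiv:1212.5088 — 3 statements merged into one kernel-verified Lean document; each statement's English description precedes it below -/
import Mathlib

section
/- If f : ℝ^d → ℝ^d is C² with bounded first and second derivatives, then the composition map q ↦ f∘q from H¹(S¹, ℝ^d) to itself is Lipschitz on bounded sets: ‖f∘q₁ − f∘q₂‖_{H¹} ≤ C ‖f‖_{2,∞} ‖q₁ − q₂‖_{H¹}, where C depends only on bounds for ‖q₁‖_{H¹}, ‖q₂‖_{H¹}. -/
/-!
Write `Δ = q₁ - q₂`. Pointwise `‖f ∘ q₁ - f ∘ q₂‖ ≤ M ‖Δ‖`, and the derivative difference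
`Df(q₁) q₁' - Df(q₂) q₂' = Df(q₁) Δ' + (Df(q₁) - Df(q₂)) q₂'` is at most `M ‖Δ'‖ + M ‖Δ‖ ‖q₂'‖`.
The product `‖Δ‖ ‖q₂'‖` is the only term not controlled in `L²` directly: it is handled by the
one-dimensional Sobolev embedding `sup ‖Δ‖² ≤ 2 ‖Δ‖²_{L²} + ‖Δ'‖²_{L²}` (the fundamental theorem
of calculus for `‖Δ‖²`, averaged over the base point) together with `‖q₂'‖_{L²} ≤ r`.
This yields `C = √(2 + 4 r²)`.
-/

open MeasureTheory intervalIntegral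

/-- The `H¹` norm of a periodic vector-valued function `q` with derivative `q'`
on the circle (modelled as `[0,1]` with periodic identification). -/
noncomputable def H1NormV {d : ℕ} (q q' : ℝ → EuclideanSpace ℝ (Fin d)) : ℝ :=
  Real.sqrt ((∫ s in (0:ℝ)..1, ‖q s‖ ^ 2) + ∫ s in (0:ℝ)..1, ‖q' s‖ ^ 2)

open Set

section Sobolev

variable {E : Type*} [NormedAddCommGroup E] [InnerProductSpace ℝ E]
  {g g' : ℝ → E}

theorem sq_norm_le_sq_norm_add_integral (hg : ∀ t, HasDerivAt g (g' t) t) (hg' : Continuous g')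
    {s u : ℝ} (hs : s ∈ Icc (0:ℝ) 1) (hu : u ∈ Icc (0:ℝ) 1) :
    ‖g s‖ ^ 2 ≤ ‖g u‖ ^ 2 + ∫ t in (0:ℝ)..1, 2 * ‖g t‖ * ‖g' t‖ := by
  have hgc : Continuous g := continuous_iff_continuousAt.2 fun t => (hg t).continuousAt
  have hbound : Continuous fun t => 2 * ‖g t‖ * ‖g' t‖ := by fun_prop
  have hftc : ∫ t in u..s, 2 * inner ℝ (g t) (g' t) = ‖g s‖ ^ 2 - ‖g u‖ ^ 2 :=
    integral_eq_sub_of_hasDerivAt (fun t _ => (hg t).norm_sq)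
      ((continuous_const.mul (hgc.inner hg')).intervalIntegrable _ _)
  have hsub : uIcc u s ⊆ uIcc 0 1 := by
    rw [uIcc_of_le zero_le_one]
    exact uIcc_subset_Icc hu hs
  have hpt : ∀ t, ‖2 * inner ℝ (g t) (g' t)‖ ≤ 2 * ‖g t‖ * ‖g' t‖ := fun t => by
    rw [Real.norm_eq_abs, abs_mul, abs_two, mul_assoc]
    exact mul_le_mul_of_nonneg_left (abs_real_inner_le_norm _ _) zero_le_two
  have hle : ‖∫ t in u..s, 2 * inner ℝ (g t) (g' t)‖ ≤ |∫ t in (0:ℝ)..1, 2 * ‖g t‖ * ‖g' t‖| :=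
    (norm_integral_le_abs_of_norm_le (ae_of_all _ hpt) (hbound.intervalIntegrable _ _)).trans
      (abs_integral_mono_interval (uIoc_subset_uIoc_of_uIcc_subset_uIcc hsub)
        (ae_of_all _ fun t => by positivity) (hbound.intervalIntegrable _ _))
  have hnonneg : 0 ≤ ∫ t in (0:ℝ)..1, 2 * ‖g t‖ * ‖g' t‖ :=
    integral_nonneg zero_le_one fun t _ => by positivity
  rw [abs_of_nonneg hnonneg, hftc, Real.norm_eq_abs] at hle
  linarith [le_abs_self (‖g s‖ ^ 2 - ‖g u‖ ^ 2)]

theorem sq_norm_le_of_hasDerivAt (hg : ∀ t, HasDerivAt g (g' t) t) (hg' : Continuous g')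
    {s : ℝ} (hs : s ∈ Icc (0:ℝ) 1) :
    ‖g s‖ ^ 2 ≤ 2 * (∫ t in (0:ℝ)..1, ‖g t‖ ^ 2) + ∫ t in (0:ℝ)..1, ‖g' t‖ ^ 2 := by
  have hgc : Continuous g := continuous_iff_continuousAt.2 fun t => (hg t).continuousAt
  set J := ∫ t in (0:ℝ)..1, 2 * ‖g t‖ * ‖g' t‖
  have hJ : J ≤ (∫ t in (0:ℝ)..1, ‖g t‖ ^ 2) + ∫ t in (0:ℝ)..1, ‖g' t‖ ^ 2 := by
    rw [← integral_add (Continuous.intervalIntegrable (by fun_prop) _ _)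
      (Continuous.intervalIntegrable (by fun_prop) _ _)]
    exact integral_mono_on zero_le_one (Continuous.intervalIntegrable (by fun_prop) _ _)
      (Continuous.intervalIntegrable (by fun_prop) _ _)
      fun t _ => two_mul_le_add_sq _ _
  have havg : ‖g s‖ ^ 2 ≤ ∫ u in (0:ℝ)..1, (‖g u‖ ^ 2 + J) := by
    simpa using integral_mono_on (μ := volume) zero_le_one intervalIntegrable_const
      (Continuous.intervalIntegrable (by fun_prop) _ _)
      fun u hu => sq_norm_le_sq_norm_add_integral hg hg' hs hu
  rw [integral_add (Continuous.intervalIntegrable (by fun_prop) _ _) intervalIntegrable_const,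
    intervalIntegral.integral_const, sub_zero, one_smul] at havg
  linarith

end Sobolev

section NormedSpace

variable {E F : Type*} [NormedAddCommGroup E] [NormedSpace ℝ E] [NormedAddCommGroup F]
  [NormedSpace ℝ F] {M : ℝ}

theorem norm_sub_le_of_norm_fderiv_le {f : E → F} (hf : Differentiable ℝ f)
    (hM : ∀ x, ‖fderiv ℝ f x‖ ≤ M) (x y : E) : ‖f x - f y‖ ≤ M * ‖x - y‖ :=
  convex_univ.norm_image_sub_le_of_norm_fderiv_le (fun z _ => hf z) (fun z _ => hM z)
    (mem_univ y) (mem_univ x)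

theorem ContinuousLinearMap.norm_apply_sub_apply_le (A B : E →L[ℝ] F) (v w : E) :
    ‖A v - B w‖ ≤ ‖A‖ * ‖v - w‖ + ‖A - B‖ * ‖w‖ := by
  have hsplit : A v - B w = A (v - w) + (A - B) w := by
    simp only [map_sub, sub_apply, sub_add_sub_cancel]
  rw [hsplit]
  exact (norm_add_le _ _).trans (add_le_add (A.le_opNorm _) ((A - B).le_opNorm _))

theorem sq_norm_apply_sub_apply_le {A : E → E →L[ℝ] F} (hA : ∀ x, ‖A x‖ ≤ M)
    (hLip : ∀ x y, ‖A x - A y‖ ≤ M * ‖x - y‖) (x₁ x₂ v₁ v₂ : E) :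
    ‖A x₁ v₁ - A x₂ v₂‖ ^ 2 ≤ 2 * M ^ 2 * ‖v₁ - v₂‖ ^ 2 + 2 * M ^ 2 * ‖x₁ - x₂‖ ^ 2 * ‖v₂‖ ^ 2 := by
  have h : ‖A x₁ v₁ - A x₂ v₂‖ ≤ M * ‖v₁ - v₂‖ + M * ‖x₁ - x₂‖ * ‖v₂‖ :=
    ((A x₁).norm_apply_sub_apply_le (A x₂) v₁ v₂).trans <|
      add_le_add (mul_le_mul_of_nonneg_right (hA x₁) (norm_nonneg _))
        (mul_le_mul_of_nonneg_right (hLip x₁ x₂) (norm_nonneg _))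
  calc ‖A x₁ v₁ - A x₂ v₂‖ ^ 2 ≤ (M * ‖v₁ - v₂‖ + M * ‖x₁ - x₂‖ * ‖v₂‖) ^ 2 :=
        pow_le_pow_left₀ (norm_nonneg _) h 2
    _ ≤ 2 * ((M * ‖v₁ - v₂‖) ^ 2 + (M * ‖x₁ - x₂‖ * ‖v₂‖) ^ 2) := add_sq_le
    _ = _ := by ring

end NormedSpace

theorem integral_sq_norm_comp_sub_comp_le {E F : Type*} [NormedAddCommGroup E]
    [NormedAddCommGroup F] {M : ℝ} {q₁ q₂ : ℝ → E} {f : E → F} (hf : Continuous f)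
    (hLip : ∀ x y, ‖f x - f y‖ ≤ M * ‖x - y‖) (hq₁ : Continuous q₁) (hq₂ : Continuous q₂) :
    ∫ s in (0:ℝ)..1, ‖f (q₁ s) - f (q₂ s)‖ ^ 2 ≤
      M ^ 2 * ∫ s in (0:ℝ)..1, ‖q₁ s - q₂ s‖ ^ 2 := by
  rw [← intervalIntegral.integral_const_mul]
  refine integral_mono_on zero_le_one (Continuous.intervalIntegrable (by fun_prop) _ _)
    (Continuous.intervalIntegrable (by fun_prop) _ _) fun s _ => ?_
  rw [← mul_pow]
  exact pow_le_pow_left₀ (norm_nonneg _) (hLip _ _) 2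

section Composition

variable {E F : Type*} [NormedAddCommGroup E] [InnerProductSpace ℝ E]
  [NormedAddCommGroup F] [NormedSpace ℝ F] {M : ℝ} {q₁ q₂ q₁' q₂' : ℝ → E}

theorem integral_sq_norm_apply_sub_apply_le {A : E → E →L[ℝ] F} (hAc : Continuous A)
    (hA : ∀ x, ‖A x‖ ≤ M) (hLip : ∀ x y, ‖A x - A y‖ ≤ M * ‖x - y‖)
    (hq₁ : ∀ s, HasDerivAt q₁ (q₁' s) s) (hq₂ : ∀ s, HasDerivAt q₂ (q₂' s) s)
    (hq₁' : Continuous q₁') (hq₂' : Continuous q₂') :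
    ∫ s in (0:ℝ)..1, ‖A (q₁ s) (q₁' s) - A (q₂ s) (q₂' s)‖ ^ 2 ≤
      2 * M ^ 2 * (∫ s in (0:ℝ)..1, ‖q₁' s - q₂' s‖ ^ 2) +
        2 * M ^ 2 * (2 * (∫ s in (0:ℝ)..1, ‖q₁ s - q₂ s‖ ^ 2) +
          ∫ s in (0:ℝ)..1, ‖q₁' s - q₂' s‖ ^ 2) * ∫ s in (0:ℝ)..1, ‖q₂' s‖ ^ 2 := by
  have hc₁ : Continuous q₁ := continuous_iff_continuousAt.2 fun s => (hq₁ s).continuousAt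
  have hc₂ : Continuous q₂ := continuous_iff_continuousAt.2 fun s => (hq₂ s).continuousAt
  set S := 2 * (∫ s in (0:ℝ)..1, ‖q₁ s - q₂ s‖ ^ 2) + ∫ s in (0:ℝ)..1, ‖q₁' s - q₂' s‖ ^ 2
  have hsup : ∀ s ∈ Icc (0:ℝ) 1, ‖q₁ s - q₂ s‖ ^ 2 ≤ S :=
    fun s hs => sq_norm_le_of_hasDerivAt (fun t => (hq₁ t).sub (hq₂ t)) (hq₁'.sub hq₂') hs
  rw [← intervalIntegral.integral_const_mul, ← intervalIntegral.integral_const_mul, ← integral_add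
    (Continuous.intervalIntegrable (by fun_prop) _ _)
    (Continuous.intervalIntegrable (by fun_prop) _ _)]
  refine integral_mono_on zero_le_one (Continuous.intervalIntegrable (by fun_prop) _ _)
    (Continuous.intervalIntegrable (by fun_prop) _ _) fun s hs => ?_
  refine (sq_norm_apply_sub_apply_le hA hLip _ _ _ _).trans ?_
  gcongr
  exact hsup s hs

end Composition

section H1

variable {d : ℕ}

theorem H1NormV_le_mul_of_sq_le {p p' q q' : ℝ → EuclideanSpace ℝ (Fin d)} {K : ℝ} (hK : 0 ≤ K)
    (h : (∫ s in (0:ℝ)..1, ‖p s‖ ^ 2) + ∫ s in (0:ℝ)..1, ‖p' s‖ ^ 2 ≤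
      K ^ 2 * ((∫ s in (0:ℝ)..1, ‖q s‖ ^ 2) + ∫ s in (0:ℝ)..1, ‖q' s‖ ^ 2)) :
    H1NormV p p' ≤ K * H1NormV q q' := by
  unfold H1NormV
  rw [← Real.sqrt_sq hK, ← Real.sqrt_mul (sq_nonneg K)]
  exact Real.sqrt_le_sqrt h

theorem integral_sq_norm_deriv_le_of_H1NormV_le {q q' : ℝ → EuclideanSpace ℝ (Fin d)} {r : ℝ}
    (h : H1NormV q q' ≤ r) : ∫ s in (0:ℝ)..1, ‖q' s‖ ^ 2 ≤ r ^ 2 := by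
  have h₀ : 0 ≤ ∫ s in (0:ℝ)..1, ‖q s‖ ^ 2 := integral_nonneg zero_le_one fun s _ => by positivity
  have h₁ : 0 ≤ ∫ s in (0:ℝ)..1, ‖q' s‖ ^ 2 := integral_nonneg zero_le_one fun s _ => by positivity
  have := (Real.sqrt_le_left ((Real.sqrt_nonneg _).trans h)).1 h
  linarith

end H1

theorem stmt_3_general (d : ℕ) (f : EuclideanSpace ℝ (Fin d) → EuclideanSpace ℝ (Fin d))
    (hf : ContDiff ℝ 2 f) (M : ℝ)
    (hM : ∀ x, ‖f x‖ ≤ M ∧ ‖fderiv ℝ f x‖ ≤ M ∧ ‖fderiv ℝ (fderiv ℝ f) x‖ ≤ M)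
    (r : ℝ) :
    ∃ C : ℝ, 0 < C ∧
      ∀ (q₁ q₂ q₁' q₂' : ℝ → EuclideanSpace ℝ (Fin d)),
        Function.Periodic q₁ 1 → Function.Periodic q₂ 1 →
        (∀ s, HasDerivAt q₁ (q₁' s) s) → (∀ s, HasDerivAt q₂ (q₂' s) s) →
        Continuous q₁' → Continuous q₂' →
        H1NormV q₁ q₁' ≤ r → H1NormV q₂ q₂' ≤ r →
        H1NormV (fun s => f (q₁ s) - f (q₂ s))
            (fun s => fderiv ℝ f (q₁ s) (q₁' s) - fderiv ℝ f (q₂ s) (q₂' s)) ≤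
          C * M * H1NormV (fun s => q₁ s - q₂ s) (fun s => q₁' s - q₂' s) := by
  have hM₀ : 0 ≤ M := (norm_nonneg _).trans (hM 0).1
  have hLip := norm_sub_le_of_norm_fderiv_le (hf.differentiable two_ne_zero) fun x => (hM x).2.1
  have hLipD := norm_sub_le_of_norm_fderiv_le
    ((hf.fderiv_right (m := 1) le_rfl).differentiable one_ne_zero) fun x => (hM x).2.2
  refine ⟨√(2 + 4 * r ^ 2), by positivity,
    fun q₁ q₂ q₁' q₂' _ _ hq₁ hq₂ hq₁' hq₂' _ hn₂ => H1NormV_le_mul_of_sq_le (by positivity) ?_⟩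
  have hvalue := integral_sq_norm_comp_sub_comp_le hf.continuous hLip
    (continuous_iff_continuousAt.2 fun s => (hq₁ s).continuousAt)
    (continuous_iff_continuousAt.2 fun s => (hq₂ s).continuousAt)
  have hderiv := integral_sq_norm_apply_sub_apply_le (hf.continuous_fderiv two_ne_zero)
    (fun x => (hM x).2.1) hLipD hq₁ hq₂ hq₁' hq₂'
  have hR := integral_sq_norm_deriv_le_of_H1NormV_le hn₂
  set A := ∫ s in (0:ℝ)..1, ‖q₁ s - q₂ s‖ ^ 2
  set B := ∫ s in (0:ℝ)..1, ‖q₁' s - q₂' s‖ ^ 2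
  have hA₀ : 0 ≤ A := integral_nonneg zero_le_one fun s _ => by positivity
  have hB₀ : 0 ≤ B := integral_nonneg zero_le_one fun s _ => by positivity
  rw [mul_pow, Real.sq_sqrt (by positivity)]
  nlinarith [mul_le_mul_of_nonneg_left hR (by positivity : 0 ≤ 2 * M ^ 2 * (2 * A + B)),
    mul_nonneg (sq_nonneg M) hA₀, mul_nonneg (mul_nonneg (sq_nonneg r) (sq_nonneg M)) hB₀]

/-- If `f : ℝ^d → ℝ^d` is `C²` with `f`, `Df`, `D²f` all bounded by
`M` (i.e. `‖f‖_{2,∞} ≤ M`), then `q ↦ f∘q` is Lipschitz on bounded sets of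
`H¹(S¹, ℝ^d)`: for every `r` there is `C` (depending only on `r`) such that for
all `q₁, q₂` with `H¹` norms `≤ r`,
`‖f∘q₁ − f∘q₂‖_{H¹} ≤ C ‖f‖_{2,∞} ‖q₁ − q₂‖_{H¹}`. -/
theorem stmt_3 (d : ℕ) (f : EuclideanSpace ℝ (Fin d) → EuclideanSpace ℝ (Fin d))
    (hf : ContDiff ℝ 2 f) (M : ℝ)
    (hM : ∀ x, ‖f x‖ ≤ M ∧ ‖fderiv ℝ f x‖ ≤ M ∧ ‖fderiv ℝ (fderiv ℝ f) x‖ ≤ M)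
    (r : ℝ) (hr : 0 < r) :
    ∃ C : ℝ, 0 < C ∧
      ∀ (q₁ q₂ q₁' q₂' : ℝ → EuclideanSpace ℝ (Fin d)),
        Function.Periodic q₁ 1 → Function.Periodic q₂ 1 →
        (∀ s, HasDerivAt q₁ (q₁' s) s) → (∀ s, HasDerivAt q₂ (q₂' s) s) →
        Continuous q₁' → Continuous q₂' →
        H1NormV q₁ q₁' ≤ r → H1NormV q₂ q₂' ≤ r →
        H1NormV (fun s => f (q₁ s) - f (q₂ s))
            (fun s => fderiv ℝ f (q₁ s) (q₁' s) - fderiv ℝ f (q₂ s) (q₂' s)) ≤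
          C * M * H1NormV (fun s => q₁ s - q₂ s) (fun s => q₁' s - q₂' s) :=
  stmt_3_general d f hf M hM r
end

section
/- Let B be a Hilbert space of vector fields on ℝ² continuously embedded in C¹ (i.e., there is C_e with ‖v‖_{1,∞} ≤ C_e ‖v‖_B for all v ∈ B). Then the momentum map J : L²(S¹,ℝ²) × L²(S¹,ℝ²) → B*, defined by J(p,q)(v) = ⟨p, v∘q⟩_{L²}, is well-defined and Lipschitz continuous on bounded sets of L² × L² with respect to the dual norm on B*. -/
/-!
`|⟪p, v ∘ q⟫| ≤ C‖v‖ ‖p‖`, so `J(p, q)` is bounded by `C ‖p‖_{L¹}` on `B`. For the Lipschitz bound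
split `⟪p₁, v ∘ q₁⟫ - ⟪p₂, v ∘ q₂⟫ = ⟪p₁ - p₂, v ∘ q₁⟫ + ⟪p₂, v ∘ q₁ - v ∘ q₂⟫`: the first term is
controlled by the sup bound on `v` and `‖·‖_{L¹} ≤ ‖·‖_{L²}` on the unit interval, the second by the
Lipschitz bound on `v` and Cauchy–Schwarz, which gives `L = C_e (1 + r)`.
-/

open MeasureTheory
open scoped RealInnerProductSpace

section LpEstimates

variable {α E F : Type*} [MeasurableSpace α] {μ : Measure α}
  [NormedAddCommGroup E] [NormedAddCommGroup F]

theorem integral_norm_eq_toReal_eLpNorm_one {f : α → E} (hf : AEStronglyMeasurable f μ) :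
    ∫ a, ‖f a‖ ∂μ = (eLpNorm f 1 μ).toReal := by
  rw [integral_norm_eq_lintegral_enorm hf, eLpNorm_one_eq_lintegral_enorm]

theorem integral_norm_le_toReal_eLpNorm_two [IsProbabilityMeasure μ] {f : α → E}
    (hf : MemLp f 2 μ) : ∫ a, ‖f a‖ ∂μ ≤ (eLpNorm f 2 μ).toReal := by
  rw [integral_norm_eq_toReal_eLpNorm_one hf.1]
  exact ENNReal.toReal_mono hf.2.ne (eLpNorm_le_eLpNorm_of_exponent_le one_le_two hf.1)

theorem integral_norm_mul_norm_le {f : α → E} {g : α → F} (hf : MemLp f 2 μ) (hg : MemLp g 2 μ) :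
    ∫ a, ‖f a‖ * ‖g a‖ ∂μ ≤ (eLpNorm f 2 μ).toReal * (eLpNorm g 2 μ).toReal := by
  have hfg : AEStronglyMeasurable (fun a => ‖f a‖ * ‖g a‖) μ := hf.1.norm.mul hg.1.norm
  have holder := eLpNorm_le_eLpNorm_mul_eLpNorm_of_nnnorm (p := 2) (q := 2) (r := 1) hf.1 hg.1
    (fun x y => ‖x‖ * ‖y‖) 1 (.of_forall fun a => by simp)
  calc ∫ a, ‖f a‖ * ‖g a‖ ∂μ = ∫ a, ‖‖f a‖ * ‖g a‖‖ ∂μ := by simp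
    _ = (eLpNorm (fun a => ‖f a‖ * ‖g a‖) 1 μ).toReal := integral_norm_eq_toReal_eLpNorm_one hfg
    _ ≤ (eLpNorm f 2 μ * eLpNorm g 2 μ).toReal := by
        gcongr
        · exact ENNReal.mul_ne_top hf.2.ne hg.2.ne
        · simpa using holder
    _ = _ := ENNReal.toReal_mul

end LpEstimates

theorem norm_inner_comp_sub_inner_comp_le {E F : Type*} [SeminormedAddCommGroup E]
    [NormedAddCommGroup F] [InnerProductSpace ℝ F] {g : E → F} {M K : ℝ}
    (hbdd : ∀ y, ‖g y‖ ≤ M) (hlip : ∀ y y', ‖g y - g y'‖ ≤ K * ‖y - y'‖) (x₁ x₂ : F) (y₁ y₂ : E) :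
    ‖⟪x₁, g y₁⟫ - ⟪x₂, g y₂⟫‖ ≤ M * ‖x₁ - x₂‖ + K * (‖x₂‖ * ‖y₁ - y₂‖) := by
  have hsplit : ⟪x₁, g y₁⟫ - ⟪x₂, g y₂⟫ = ⟪x₁ - x₂, g y₁⟫ + ⟪x₂, g y₁ - g y₂⟫ := by
    rw [inner_sub_left, inner_sub_right]; ring
  rw [hsplit]
  calc ‖⟪x₁ - x₂, g y₁⟫ + ⟪x₂, g y₁ - g y₂⟫‖
      ≤ ‖x₁ - x₂‖ * ‖g y₁‖ + ‖x₂‖ * ‖g y₁ - g y₂‖ :=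
        (norm_add_le _ _).trans (add_le_add (norm_inner_le_norm _ _) (norm_inner_le_norm _ _))
    _ ≤ ‖x₁ - x₂‖ * M + ‖x₂‖ * (K * ‖y₁ - y₂‖) := by
        gcongr
        · exact hbdd y₁
        · exact hlip y₁ y₂
    _ = M * ‖x₁ - x₂‖ + K * (‖x₂‖ * ‖y₁ - y₂‖) := by ring

section MomentumMap

variable {α E F B : Type*} [MeasurableSpace α] {μ : Measure α}
  [NormedAddCommGroup E] [NormedAddCommGroup F] [InnerProductSpace ℝ F]
  [NormedAddCommGroup B] [NormedSpace ℝ B]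

theorem MeasureTheory.Integrable.inner_comp {p : α → F} {q : α → E} {g : E → F} {M : ℝ}
    (hp : Integrable p μ) (hq : AEStronglyMeasurable q μ) (hg : Continuous g)
    (hbdd : ∀ y, ‖g y‖ ≤ M) : Integrable (fun s => ⟪p s, g (q s)⟫) μ := by
  refine (hp.norm.const_mul M).mono' (hp.1.inner (hg.comp_aestronglyMeasurable hq))
    (.of_forall fun s => ?_)
  calc ‖⟪p s, g (q s)⟫‖ ≤ ‖p s‖ * ‖g (q s)‖ := norm_inner_le_norm _ _
    _ ≤ ‖p s‖ * M := by gcongr; exact hbdd _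
    _ = M * ‖p s‖ := mul_comm _ _

noncomputable def momentumMap (ι : B →ₗ[ℝ] (E → F)) {C : ℝ} (hbdd : ∀ v x, ‖ι v x‖ ≤ C * ‖v‖)
    (hcont : ∀ v, Continuous (ι v)) {p : α → F} {q : α → E} (hp : Integrable p μ)
    (hq : AEStronglyMeasurable q μ) : B →L[ℝ] ℝ :=
  LinearMap.mkContinuous
    { toFun := fun v => ∫ s, ⟪p s, ι v (q s)⟫ ∂μ
      map_add' := fun v w => by
        simp only [map_add, Pi.add_apply, inner_add_right]
        exact integral_add (hp.inner_comp hq (hcont v) (hbdd v))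
          (hp.inner_comp hq (hcont w) (hbdd w))
      map_smul' := fun c v => by
        simp only [map_smul, Pi.smul_apply, real_inner_smul_right, RingHom.id_apply, smul_eq_mul]
        exact integral_const_mul c _ }
    (C * ∫ s, ‖p s‖ ∂μ) fun v => by
      calc ‖∫ s, ⟪p s, ι v (q s)⟫ ∂μ‖ ≤ ∫ s, C * ‖v‖ * ‖p s‖ ∂μ :=
            norm_integral_le_of_norm_le (hp.norm.const_mul _) (.of_forall fun s =>
              (norm_inner_le_norm _ _).trans (by rw [mul_comm]; gcongr; exact hbdd v _))
        _ = C * (∫ s, ‖p s‖ ∂μ) * ‖v‖ := by rw [integral_const_mul]; ring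

theorem momentumMap_apply (ι : B →ₗ[ℝ] (E → F)) {C : ℝ} (hbdd : ∀ v x, ‖ι v x‖ ≤ C * ‖v‖)
    (hcont : ∀ v, Continuous (ι v)) {p : α → F} {q : α → E} (hp : Integrable p μ)
    (hq : AEStronglyMeasurable q μ) (v : B) :
    momentumMap ι hbdd hcont hp hq v = ∫ s, ⟪p s, ι v (q s)⟫ ∂μ :=
  rfl

theorem norm_momentumMap_sub_le [IsProbabilityMeasure μ] (ι : B →ₗ[ℝ] (E → F)) {C : ℝ}
    (hC : 0 ≤ C) (hbdd : ∀ v x, ‖ι v x‖ ≤ C * ‖v‖)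
    (hlip : ∀ v x y, ‖ι v x - ι v y‖ ≤ C * ‖v‖ * ‖x - y‖) (hcont : ∀ v, Continuous (ι v))
    {p₁ p₂ : α → F} {q₁ q₂ : α → E} (hp₁ : MemLp p₁ 2 μ) (hp₂ : MemLp p₂ 2 μ)
    (hq₁ : MemLp q₁ 2 μ) (hq₂ : MemLp q₂ 2 μ) :
    ‖momentumMap ι hbdd hcont (hp₁.integrable one_le_two) hq₁.1 -
        momentumMap ι hbdd hcont (hp₂.integrable one_le_two) hq₂.1‖ ≤
      C * ((eLpNorm (fun s => p₁ s - p₂ s) 2 μ).toReal +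
        (eLpNorm p₂ 2 μ).toReal * (eLpNorm (fun s => q₁ s - q₂ s) 2 μ).toReal) := by
  have hΔp : MemLp (fun s => p₁ s - p₂ s) 2 μ := hp₁.sub hp₂
  have hΔq : MemLp (fun s => q₁ s - q₂ s) 2 μ := hq₁.sub hq₂
  have hΔp₁ : Integrable (fun s => ‖p₁ s - p₂ s‖) μ := (hΔp.integrable one_le_two).norm
  have hp₂Δq : Integrable (fun s => ‖p₂ s‖ * ‖q₁ s - q₂ s‖) μ := hp₂.norm.integrable_mul hΔq.norm
  refine ContinuousLinearMap.opNorm_le_bound _ (by positivity) fun v => ?_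
  rw [sub_apply, momentumMap_apply, momentumMap_apply,
    ← integral_sub ((hp₁.integrable one_le_two).inner_comp hq₁.1 (hcont v) (hbdd v))
      ((hp₂.integrable one_le_two).inner_comp hq₂.1 (hcont v) (hbdd v))]
  calc ‖∫ s, (⟪p₁ s, ι v (q₁ s)⟫ - ⟪p₂ s, ι v (q₂ s)⟫) ∂μ‖
      ≤ ∫ s, C * ‖v‖ * (‖p₁ s - p₂ s‖ + ‖p₂ s‖ * ‖q₁ s - q₂ s‖) ∂μ :=
        norm_integral_le_of_norm_le ((hΔp₁.add hp₂Δq).const_mul _) (.of_forall fun s =>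
          (norm_inner_comp_sub_inner_comp_le (hbdd v) (hlip v) _ _ _ _).trans_eq (by ring))
    _ = C * ‖v‖ * (∫ s, ‖p₁ s - p₂ s‖ ∂μ + ∫ s, ‖p₂ s‖ * ‖q₁ s - q₂ s‖ ∂μ) := by
        rw [integral_const_mul, integral_add hΔp₁ hp₂Δq]
    _ ≤ C * ‖v‖ * ((eLpNorm (fun s => p₁ s - p₂ s) 2 μ).toReal +
          (eLpNorm p₂ 2 μ).toReal * (eLpNorm (fun s => q₁ s - q₂ s) 2 μ).toReal) := by
        gcongr
        · exact integral_norm_le_toReal_eLpNorm_two hΔp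
        · exact integral_norm_mul_norm_le hp₂ hΔq
    _ = _ := by ring

end MomentumMap

theorem stmt_5_general (B : Type*) [NormedAddCommGroup B] [InnerProductSpace ℝ B]
    (ι : B →ₗ[ℝ] (EuclideanSpace ℝ (Fin 2) → EuclideanSpace ℝ (Fin 2)))
    (Ce : ℝ) (hCe : 0 < Ce)
    (hbdd : ∀ (v : B) (x : EuclideanSpace ℝ (Fin 2)), ‖ι v x‖ ≤ Ce * ‖v‖)
    (hlip : ∀ (v : B) (x y : EuclideanSpace ℝ (Fin 2)),
      ‖ι v x - ι v y‖ ≤ Ce * ‖v‖ * ‖x - y‖) :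
    ∃ J : (ℝ → EuclideanSpace ℝ (Fin 2)) → (ℝ → EuclideanSpace ℝ (Fin 2)) → (B →L[ℝ] ℝ),
      -- `J` is given by the claimed formula on `L²` pairs
      (∀ p q : ℝ → EuclideanSpace ℝ (Fin 2),
        MemLp p 2 (volume.restrict (Set.Ioc (0:ℝ) 1)) →
        MemLp q 2 (volume.restrict (Set.Ioc (0:ℝ) 1)) →
        ∀ v : B, J p q v = ∫ s in Set.Ioc (0:ℝ) 1, ⟪p s, ι v (q s)⟫) ∧
      -- Lipschitz continuity on bounded sets of `L² × L²`
      (∀ r : ℝ, 0 < r → ∃ L : ℝ, 0 ≤ L ∧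
        ∀ p₁ q₁ p₂ q₂ : ℝ → EuclideanSpace ℝ (Fin 2),
          MemLp p₁ 2 (volume.restrict (Set.Ioc (0:ℝ) 1)) →
          MemLp q₁ 2 (volume.restrict (Set.Ioc (0:ℝ) 1)) →
          MemLp p₂ 2 (volume.restrict (Set.Ioc (0:ℝ) 1)) →
          MemLp q₂ 2 (volume.restrict (Set.Ioc (0:ℝ) 1)) →
          eLpNorm p₁ 2 (volume.restrict (Set.Ioc (0:ℝ) 1)) ≤ ENNReal.ofReal r →
          eLpNorm q₁ 2 (volume.restrict (Set.Ioc (0:ℝ) 1)) ≤ ENNReal.ofReal r →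
          eLpNorm p₂ 2 (volume.restrict (Set.Ioc (0:ℝ) 1)) ≤ ENNReal.ofReal r →
          eLpNorm q₂ 2 (volume.restrict (Set.Ioc (0:ℝ) 1)) ≤ ENNReal.ofReal r →
          ‖J p₁ q₁ - J p₂ q₂‖ ≤ L *
            ((eLpNorm (fun s => p₁ s - p₂ s) 2 (volume.restrict (Set.Ioc (0:ℝ) 1))).toReal +
             (eLpNorm (fun s => q₁ s - q₂ s) 2 (volume.restrict (Set.Ioc (0:ℝ) 1))).toReal)) := by
  classical
  set μ : Measure ℝ := volume.restrict (Set.Ioc (0:ℝ) 1)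
  have : IsProbabilityMeasure μ := ⟨by simp [μ, Real.volume_Ioc]⟩
  have hcont : ∀ v, Continuous (ι v) := fun v =>
    (LipschitzWith.of_dist_le' fun x y => by simpa only [dist_eq_norm] using hlip v x y).continuous
  let J p q : B →L[ℝ] ℝ := if h : MemLp p 2 μ ∧ MemLp q 2 μ then
    momentumMap ι hbdd hcont (h.1.integrable one_le_two) h.2.1 else 0
  refine ⟨J, fun p q hp hq v => by simp only [J, dif_pos (And.intro hp hq), momentumMap_apply],
    fun r hr => ⟨Ce * (1 + r), by positivity, ?_⟩⟩
  intro p₁ q₁ p₂ q₂ hp₁ hq₁ hp₂ hq₂ _ _ hp₂r _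
  simp only [J, dif_pos (And.intro hp₁ hq₁), dif_pos (And.intro hp₂ hq₂)]
  refine (norm_momentumMap_sub_le ι hCe.le hbdd hlip hcont hp₁ hp₂ hq₁ hq₂).trans ?_
  have hp₂r' : (eLpNorm p₂ 2 μ).toReal ≤ r := ENNReal.toReal_le_of_le_ofReal hr.le hp₂r
  set Δp := (eLpNorm (fun s => p₁ s - p₂ s) 2 μ).toReal
  set Δq := (eLpNorm (fun s => q₁ s - q₂ s) 2 μ).toReal
  have hΔ : 0 ≤ Ce * (r * Δp + Δq) := by positivity
  calc Ce * (Δp + (eLpNorm p₂ 2 μ).toReal * Δq) ≤ Ce * (Δp + r * Δq) := by gcongr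
    _ ≤ Ce * (1 + r) * (Δp + Δq) := by linarith

/-- Let `B` be a Hilbert space of vector fields on `ℝ²`,
continuously embedded in `C¹` (realised through a linear map `ι` into vector
fields whose values and Lipschitz constants are controlled by `C_e ‖v‖_B`).
Then the momentum map `J : L²(S¹,ℝ²) × L²(S¹,ℝ²) → B*`, given by
`J(p,q)(v) = ⟨p, v∘q⟩_{L²} = ∫_{S¹} p(s)·v(q(s)) ds`, is well defined
(i.e. `J(p,q)` is a continuous linear functional on `B`) and is Lipschitz
continuous on bounded sets of `L² × L²` with respect to the dual norm on `B*`. -/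
theorem stmt_5 (B : Type*) [NormedAddCommGroup B] [InnerProductSpace ℝ B] [CompleteSpace B]
    (ι : B →ₗ[ℝ] (EuclideanSpace ℝ (Fin 2) → EuclideanSpace ℝ (Fin 2)))
    (Ce : ℝ) (hCe : 0 < Ce)
    (hbdd : ∀ (v : B) (x : EuclideanSpace ℝ (Fin 2)), ‖ι v x‖ ≤ Ce * ‖v‖)
    (hlip : ∀ (v : B) (x y : EuclideanSpace ℝ (Fin 2)),
      ‖ι v x - ι v y‖ ≤ Ce * ‖v‖ * ‖x - y‖) :
    ∃ J : (ℝ → EuclideanSpace ℝ (Fin 2)) → (ℝ → EuclideanSpace ℝ (Fin 2)) → (B →L[ℝ] ℝ),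
      -- `J` is given by the claimed formula on `L²` pairs
      (∀ p q : ℝ → EuclideanSpace ℝ (Fin 2),
        MemLp p 2 (volume.restrict (Set.Ioc (0:ℝ) 1)) →
        MemLp q 2 (volume.restrict (Set.Ioc (0:ℝ) 1)) →
        ∀ v : B, J p q v = ∫ s in Set.Ioc (0:ℝ) 1, ⟪p s, ι v (q s)⟫) ∧
      -- Lipschitz continuity on bounded sets of `L² × L²`
      (∀ r : ℝ, 0 < r → ∃ L : ℝ, 0 ≤ L ∧
        ∀ p₁ q₁ p₂ q₂ : ℝ → EuclideanSpace ℝ (Fin 2),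
          MemLp p₁ 2 (volume.restrict (Set.Ioc (0:ℝ) 1)) →
          MemLp q₁ 2 (volume.restrict (Set.Ioc (0:ℝ) 1)) →
          MemLp p₂ 2 (volume.restrict (Set.Ioc (0:ℝ) 1)) →
          MemLp q₂ 2 (volume.restrict (Set.Ioc (0:ℝ) 1)) →
          eLpNorm p₁ 2 (volume.restrict (Set.Ioc (0:ℝ) 1)) ≤ ENNReal.ofReal r →
          eLpNorm q₁ 2 (volume.restrict (Set.Ioc (0:ℝ) 1)) ≤ ENNReal.ofReal r →
          eLpNorm p₂ 2 (volume.restrict (Set.Ioc (0:ℝ) 1)) ≤ ENNReal.ofReal r →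
          eLpNorm q₂ 2 (volume.restrict (Set.Ioc (0:ℝ) 1)) ≤ ENNReal.ofReal r →
          ‖J p₁ q₁ - J p₂ q₂‖ ≤ L *
            ((eLpNorm (fun s => p₁ s - p₂ s) 2 (volume.restrict (Set.Ioc (0:ℝ) 1))).toReal +
             (eLpNorm (fun s => q₁ s - q₂ s) 2 (volume.restrict (Set.Ioc (0:ℝ) 1))).toReal)) :=
  stmt_5_general B ι Ce hCe hbdd hlip
end

section
/- Detailed balance of the pCN Metropolis–Hastings algorithm: with target measure dμ/dμ₀(u) ∝ exp(−Φ(u)) for a measurable Φ bounded below on bounded sets, the Markov chain with proposal v = (1−β²)^{1/2}u + βw, w ∼ μ₀, and acceptance probability a(u,v) = min{1, exp(Φ(u) − Φ(v))} satisfies detailed balance with respect to μ, hence μ is an invariant measure of the chain. -/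
/-!
Both `exp (-Φ u) * a u v` and `exp (-Φ v) * a v u` equal `min (exp (-Φ u)) (exp (-Φ v))`.
Multiplying the reversible measure `μ₀ ⊗ Q` by this symmetric density shows that the accepted
part `μ ⊗ (a Q)` of the chain is reversible. A reversible sub-Markov kernel `P`, completed by
leaving the rejected mass `1 - P u univ` at `u`, keeps `μ` invariant: the mass entering a set `s`,
`(μ ⊗ P) (univ ×ˢ s)`, equals the mass leaving it, `(μ ⊗ P) (s ×ˢ univ)`.
-/

open MeasureTheory ProbabilityTheory
open scoped ENNReal
open Set

lemma Real.exp_neg_mul_min_one_exp_sub (x y : ℝ) :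
    Real.exp (-x) * min 1 (Real.exp (x - y)) = min (Real.exp (-x)) (Real.exp (-y)) := by
  rw [mul_min_of_nonneg _ _ (Real.exp_nonneg _), mul_one, ← Real.exp_add]
  congr 2
  ring

namespace MeasureTheory.Measure

variable {α β : Type*} [MeasurableSpace α] [MeasurableSpace β]

lemma map_swap_withDensity (ν : Measure (α × β)) {g : α × β → ℝ≥0∞} (hg : Measurable g) :
    (ν.withDensity g).map Prod.swap = (ν.map Prod.swap).withDensity (g ∘ Prod.swap) := by
  ext s hs
  rw [map_apply measurable_swap hs, withDensity_apply _ (measurable_swap hs),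
    withDensity_apply _ hs, setLIntegral_map hs (hg.comp measurable_swap) measurable_swap]
  rfl

lemma map_swap_withDensity_eq_self {ν : Measure (α × α)} (hν : ν.map Prod.swap = ν)
    {g : α × α → ℝ≥0∞} (hg : Measurable g) (hg_swap : ∀ p, g p.swap = g p) :
    (ν.withDensity g).map Prod.swap = ν.withDensity g := by
  rw [map_swap_withDensity ν hg, hν]
  exact congrArg ν.withDensity (funext hg_swap)

lemma withDensity_compProd_left {μ : Measure α} [SFinite μ] {κ : Kernel α β} [IsSFiniteKernel κ]
    {f : α → ℝ≥0∞} (hf : Measurable f) :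
    μ.withDensity f ⊗ₘ κ = (μ ⊗ₘ κ).withDensity (fun p ↦ f p.1) := by
  ext s hs
  rw [compProd_apply hs, withDensity_apply _ hs,
    lintegral_withDensity_eq_lintegral_mul _ hf (κ.measurable_kernel_prodMk_left hs),
    ← lintegral_indicator hs,
    lintegral_compProd (f := s.indicator fun p ↦ f p.1) ((hf.comp measurable_fst).indicator hs)]
  refine lintegral_congr fun u ↦ ?_
  rw [Pi.mul_apply, ← lintegral_indicator_const (measurable_prodMk_left hs)]
  rfl

lemma map_swap_withDensity_compProd_eq_self {μ₀ : Measure α} [SFinite μ₀] {Q : Kernel α α}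
    [IsSFiniteKernel Q] (hQ : (μ₀ ⊗ₘ Q).map Prod.swap = μ₀ ⊗ₘ Q) {ρ : α → ℝ≥0∞}
    (hρ : Measurable ρ) {A : α × α → ℝ≥0∞} (hA : Measurable A)
    (hbalance : ∀ u v, ρ u * A (u, v) = ρ v * A (v, u)) :
    ((μ₀.withDensity ρ ⊗ₘ Q).withDensity A).map Prod.swap =
      (μ₀.withDensity ρ ⊗ₘ Q).withDensity A := by
  have hρ_fst : Measurable fun p : α × α ↦ ρ p.1 := hρ.comp measurable_fst
  rw [withDensity_compProd_left hρ, ← withDensity_mul _ hρ_fst hA]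
  exact map_swap_withDensity_eq_self hQ (hρ_fst.mul hA) fun p ↦ hbalance p.2 p.1

end MeasureTheory.Measure

namespace ProbabilityTheory.Kernel

variable {α : Type*} [MeasurableSpace α]

lemma withDensity_apply_univ_le_one {β : Type*} [MeasurableSpace β] {κ : Kernel α β}
    [IsMarkovKernel κ] {f : α → β → ℝ≥0∞} (hf : Measurable (Function.uncurry f))
    (hf_le : ∀ a b, f a b ≤ 1) (a : α) :
    κ.withDensity f a univ ≤ 1 := by
  rw [Kernel.withDensity_apply' _ hf, Measure.restrict_univ]
  calc ∫⁻ b, f a b ∂κ a ≤ ∫⁻ _, 1 ∂κ a := lintegral_mono (hf_le a)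
    _ = 1 := by simp

noncomputable def withRejection (P : Kernel α α) : Kernel α α where
  toFun u := P u + (1 - P u univ) • Measure.dirac u
  measurable' := by
    refine Measure.measurable_of_measurable_coe _ fun t ht ↦ ?_
    simp_rw [Measure.coe_add, Pi.add_apply, Measure.smul_apply, smul_eq_mul,
      Measure.dirac_apply' _ ht]
    exact (P.measurable_coe ht).add
      ((measurable_const.sub (P.measurable_coe .univ)).mul (measurable_one.indicator ht))

lemma withRejection_apply (P : Kernel α α) (u : α) :
    P.withRejection u = P u + (1 - P u univ) • Measure.dirac u := rfl

lemma bind_withRejection_eq_self {μ : Measure α} [SFinite μ] {P : Kernel α α} [IsSFiniteKernel P]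
    (hP : ∀ u, P u univ ≤ 1) (hrev : (μ ⊗ₘ P).map Prod.swap = μ ⊗ₘ P) :
    μ.bind P.withRejection = μ := by
  ext s hs
  have hflow : ∫⁻ u, P u s ∂μ = ∫⁻ u in s, P u univ ∂μ := by
    simpa only [Measure.map_apply measurable_swap (hs.prod .univ), preimage_swap_prod,
      Measure.compProd_apply_prod .univ hs, Measure.compProd_apply_prod hs .univ,
      Measure.restrict_univ] using congrArg (· (s ×ˢ univ)) hrev
  calc μ.bind P.withRejection s
      = ∫⁻ u, P u s + s.indicator (fun u ↦ 1 - P u univ) u ∂μ := by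
        rw [Measure.bind_apply hs P.withRejection.measurable.aemeasurable]
        refine lintegral_congr fun u ↦ ?_
        rw [withRejection_apply, Measure.add_apply, Measure.smul_apply,
          Measure.dirac_apply' _ hs, smul_eq_mul]
        by_cases hu : u ∈ s <;> simp [hu]
    _ = ∫⁻ u in s, P u univ + (1 - P u univ) ∂μ := by
        rw [lintegral_add_left (P.measurable_coe hs), lintegral_indicator hs, hflow,
          lintegral_add_left (P.measurable_coe .univ)]
    _ = μ s := by
        simp_rw [add_tsub_cancel_of_le (hP _)]
        exact setLIntegral_one s

end ProbabilityTheory.Kernel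

theorem stmt_17_general (H : Type*) [MeasurableSpace H]
    (μ₀ : Measure H) [IsProbabilityMeasure μ₀]
    (Q : Kernel H H) [IsMarkovKernel Q]
    (hsym : Measure.map Prod.swap (μ₀.compProd Q) = μ₀.compProd Q)
    (Φ : H → ℝ) (hΦ : Measurable Φ)
    (a : H → H → ℝ) (ha : ∀ u v, a u v = min 1 (Real.exp (Φ u - Φ v)))
    (μ : Measure H)
    (hμ : μ = μ₀.withDensity (fun u => ENNReal.ofReal (Real.exp (-Φ u))))
    (K : H → Measure H)
    (hK : ∀ u, K u = (Q u).withDensity (fun v => ENNReal.ofReal (a u v)) +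
      ((1 : ENNReal) - ∫⁻ v, ENNReal.ofReal (a u v) ∂(Q u)) • Measure.dirac u) :
    -- the pointwise detailed-balance identity
    (∀ u v, Real.exp (-Φ u) * a u v = Real.exp (-Φ v) * a v u) ∧
    -- detailed balance of the acceptance-weighted proposal with respect to μ
    Measure.map Prod.swap
        ((μ.compProd Q).withDensity (fun p => ENNReal.ofReal (a p.1 p.2))) =
      (μ.compProd Q).withDensity (fun p => ENNReal.ofReal (a p.1 p.2)) ∧
    -- hence μ is invariant for the Metropolis–Hastings chain
    μ.bind K = μ := by
  subst hμ
  have hbalance (u v : H) : Real.exp (-Φ u) * a u v = Real.exp (-Φ v) * a v u := by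
    rw [ha, ha, Real.exp_neg_mul_min_one_exp_sub, Real.exp_neg_mul_min_one_exp_sub, min_comm]
  have hacc : Measurable fun p : H × H ↦ ENNReal.ofReal (a p.1 p.2) := by
    simp_rw [ha]
    fun_prop
  have hreversible := Measure.map_swap_withDensity_compProd_eq_self hsym
    (ρ := fun u ↦ ENNReal.ofReal (Real.exp (-Φ u))) (by fun_prop) hacc fun u v ↦ by
      rw [← ENNReal.ofReal_mul (Real.exp_nonneg _), ← ENNReal.ofReal_mul (Real.exp_nonneg _),
        hbalance]
  refine ⟨hbalance, hreversible, ?_⟩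
  set P := Q.withDensity fun u v ↦ ENNReal.ofReal (a u v)
  have : IsSFiniteKernel P := Kernel.IsSFiniteKernel.withDensity Q fun _ _ ↦ ENNReal.ofReal_ne_top
  have hKP : K = P.withRejection := funext fun u ↦ by
    rw [hK, Kernel.withRejection_apply, Kernel.withDensity_apply _ hacc,
      withDensity_apply _ .univ, Measure.restrict_univ]
  have hP : ∀ u, P u univ ≤ 1 := Kernel.withDensity_apply_univ_le_one hacc fun u v ↦
    ENNReal.ofReal_le_one.2 ((ha u v).trans_le (min_le_left _ _))
  rw [hKP]
  exact Kernel.bind_withRejection_eq_self hP (by rwa [Measure.compProd_withDensity hacc])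

/-- Detailed balance of the pCN Metropolis–Hastings algorithm.
With target `dμ/dμ₀(u) ∝ exp(−Φ(u))` for measurable `Φ` bounded below on
bounded sets, proposal kernel `Q` (the pCN proposal, assumed reversible with
respect to the Gaussian prior `μ₀`: `μ₀(du)Q(u,dv) = μ₀(dv)Q(v,du)`), and
acceptance probability `a(u,v) = min{1, exp(Φ(u) − Φ(v))}`, the chain
satisfies detailed balance with respect to `μ` (it suffices that
`exp(−Φ(u)) a(u,v) = exp(−Φ(v)) a(v,u)`), hence `μ` is invariant for the
Metropolis–Hastings kernel `K`. -/
theorem stmt_17 (H : Type*) [NormedAddCommGroup H] [InnerProductSpace ℝ H]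
    [CompleteSpace H] [TopologicalSpace.SeparableSpace H]
    [MeasurableSpace H] [BorelSpace H]
    (μ₀ : Measure H) [IsProbabilityMeasure μ₀]
    (Q : Kernel H H) [IsMarkovKernel Q]
    (hsym : Measure.map Prod.swap (μ₀.compProd Q) = μ₀.compProd Q)
    (Φ : H → ℝ) (hΦ : Measurable Φ)
    (hbdd : ∀ r : ℝ, ∃ c : ℝ, ∀ u : H, ‖u‖ ≤ r → c ≤ Φ u)
    (a : H → H → ℝ) (ha : ∀ u v, a u v = min 1 (Real.exp (Φ u - Φ v)))
    (μ : Measure H)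
    (hμ : μ = μ₀.withDensity (fun u => ENNReal.ofReal (Real.exp (-Φ u))))
    (K : H → Measure H)
    (hK : ∀ u, K u = (Q u).withDensity (fun v => ENNReal.ofReal (a u v)) +
      ((1 : ENNReal) - ∫⁻ v, ENNReal.ofReal (a u v) ∂(Q u)) • Measure.dirac u) :
    -- the pointwise detailed-balance identity
    (∀ u v, Real.exp (-Φ u) * a u v = Real.exp (-Φ v) * a v u) ∧
    -- detailed balance of the acceptance-weighted proposal with respect to μ
    Measure.map Prod.swap
        ((μ.compProd Q).withDensity (fun p => ENNReal.ofReal (a p.1 p.2))) =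
      (μ.compProd Q).withDensity (fun p => ENNReal.ofReal (a p.1 p.2)) ∧
    -- hence μ is invariant for the Metropolis–Hastings chain
    μ.bind K = μ :=
  stmt_17_general H μ₀ Q hsym Φ hΦ a ha μ hμ K hK
end
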